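/- Let f : [0,1] → ℝ be α-Hölder with 0 < α < 1/2, and A ∈ C^2(ℝ). Assume P^0 f = 0 and P^j f → f pointwise. Define the approximation Ã_N(f) := A(P^0 f) + ∑_{j=0}^{N} A'(P^j f)·Q^j f. Then the residual Δ_N := A(P^{N+1}f) − Ã_N(f) satisfies ‖Δ_N‖_{L^∞} ≤ C·∑_{j=0}^{N} 2^{-2jα} ≤ C/(1 − 2^{-2α}), uniformly in N; in particular the residual for A(f) is a uniformly convergent sum of scale-j terms of size O(2^{-2jα}). -/

import Mathlib

/-!
Pʲf(x) is the average of f over the dyadic cell of length 2⁻ʲ containing x, so Hölder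
continuity gives |Pʲf − f| ≤ C_f 2^{-jα} and hence |Qʲf| ≤ 2 C_f 2^{-jα}. The residual telescopes
into ∑ⱼ [A(P^{j+1}f) − A(Pʲf) − A'(Pʲf) Qʲf], a sum of second-order Taylor remainders, each at most
M (Qʲf)² ≤ 4 M C_f² 2^{-2jα}; summing the geometric series gives the bound uniformly in N.
-/

open MeasureTheory Filter

noncomputable def dyadicAvg (j : ℕ) (f : ℝ → ℝ) (x : ℝ) : ℝ :=
  (2:ℝ)^j * ∫ y in Set.Ioc (((⌈(2:ℝ)^j * x⌉ : ℝ) - 1) / (2:ℝ)^j)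
      ((⌈(2:ℝ)^j * x⌉ : ℝ) / (2:ℝ)^j), f y

noncomputable def dyadicDiff (j : ℕ) (f : ℝ → ℝ) (x : ℝ) : ℝ :=
  dyadicAvg (j+1) f x - dyadicAvg j f x

open Set

theorem abs_setAverage_sub_le {X : Type*} [MeasurableSpace X] {μ : Measure X} {s : Set X}
    {f : X → ℝ} {c ε : ℝ} (hs : MeasurableSet s) (hμs₀ : μ s ≠ 0) (hμs : μ s ≠ ⊤)
    (hf : AEStronglyMeasurable f (μ.restrict s)) (hfc : ∀ y ∈ s, |f y - c| ≤ ε) :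
    |⨍ y in s, f y ∂μ - c| ≤ ε := by
  have hm : 0 < μ.real s := ENNReal.toReal_pos hμs₀ hμs
  have hint : IntegrableOn f s μ := by
    refine .of_bound hμs.lt_top hf (|c| + ε) (ae_restrict_of_forall_mem hs fun y hy => ?_)
    have := abs_sub_abs_le_abs_sub (f y) c
    rw [Real.norm_eq_abs]
    linarith [hfc y hy]
  have hsub : ∫ y in s, (f y - c) ∂μ = ∫ y in s, f y ∂μ - μ.real s * c := by
    rw [integral_sub hint (integrableOn_const hμs), setIntegral_const, smul_eq_mul]
  have hle : |∫ y in s, (f y - c) ∂μ| ≤ ε * μ.real s :=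
    norm_setIntegral_le_of_norm_le_const (f := fun y => f y - c) hμs.lt_top hfc
  rw [setAverage_eq, smul_eq_mul, ← mul_le_mul_iff_of_pos_left hm, ← abs_of_pos hm, ← abs_mul,
    abs_of_pos hm, mul_sub, ← mul_assoc, mul_inv_cancel₀ hm.ne', one_mul, ← hsub, mul_comm]
  exact hle

theorem abs_sub_sub_deriv_mul_le {A : ℝ → ℝ} (hA : ContDiff ℝ 2 A) {a b M : ℝ}
    (hM : ∀ y ∈ Icc a b, |iteratedDeriv 2 A y| ≤ M) {x y : ℝ} (hx : x ∈ Icc a b)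
    (hy : y ∈ Icc a b) :
    |A y - A x - deriv A x * (y - x)| ≤ M * (y - x) ^ 2 := by
  have hA' : ContDiff ℝ 1 (deriv A) := (contDiff_succ_iff_deriv.mp hA).2.2
  have hderiv : ∀ t, HasDerivAt (fun t => A y - A t - deriv A t * (y - t))
      (-(deriv (deriv A) t * (y - t))) t := fun t =>
    (((hasDerivAt_const t (A y)).sub (hA.differentiable two_ne_zero t).hasDerivAt).sub
      ((hA'.differentiable one_ne_zero t).hasDerivAt.mul
        ((hasDerivAt_id t).const_sub y))).congr_deriv (by simp only [id]; ring)
  have hbound : ∀ t ∈ uIcc x y, ‖-(deriv (deriv A) t * (y - t))‖ ≤ M * |y - x| := fun t ht => by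
    rw [norm_neg, Real.norm_eq_abs, abs_mul]
    have hAt : |deriv (deriv A) t| ≤ M := by
      simpa only [iteratedDeriv_succ, iteratedDeriv_zero] using hM t (uIcc_subset_Icc hx hy ht)
    exact mul_le_mul hAt (abs_sub_right_of_mem_uIcc ht) (abs_nonneg _) ((abs_nonneg _).trans hAt)
  have key := (convex_uIcc x y).norm_image_sub_le_of_norm_hasDerivWithin_le
    (fun t _ => (hderiv t).hasDerivWithinAt) hbound left_mem_uIcc right_mem_uIcc
  rw [sub_self, sub_self, mul_zero, sub_zero, zero_sub, norm_neg, Real.norm_eq_abs,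
    Real.norm_eq_abs, mul_assoc, ← abs_mul, ← sq, abs_sq] at key
  exact key

theorem abs_sub_add_sum_deriv_mul_le {A : ℝ → ℝ} (hA : ContDiff ℝ 2 A) {a b M : ℝ}
    (hM : ∀ y ∈ Icc a b, |iteratedDeriv 2 A y| ≤ M) {u : ℕ → ℝ} (hu : ∀ j, u j ∈ Icc a b)
    (n : ℕ) :
    |A (u n) - (A (u 0) + ∑ j ∈ Finset.range n, deriv A (u j) * (u (j + 1) - u j))|
      ≤ M * ∑ j ∈ Finset.range n, (u (j + 1) - u j) ^ 2 := by
  have htelescope : A (u n) - (A (u 0) + ∑ j ∈ Finset.range n, deriv A (u j) * (u (j + 1) - u j))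
      = ∑ j ∈ Finset.range n, (A (u (j + 1)) - A (u j) - deriv A (u j) * (u (j + 1) - u j)) := by
    rw [Finset.sum_sub_distrib, Finset.sum_range_sub (fun j => A (u j))]
    ring
  rw [htelescope, Finset.mul_sum]
  exact (Finset.abs_sum_le_sum_abs _ _).trans
    (Finset.sum_le_sum fun j _ => abs_sub_sub_deriv_mul_le hA hM (hu j) (hu (j + 1)))

theorem sum_range_rpow_neg_two_mul_le {x α : ℝ} (hx : 1 < x) (hα : 0 < α) (n : ℕ) :
    ∑ j ∈ Finset.range n, x ^ (-(2:ℝ) * (j:ℝ) * α) ≤ (1 - x ^ (-(2:ℝ) * α))⁻¹ := by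
  have hr : x ^ (-(2:ℝ) * α) < 1 := Real.rpow_lt_one_of_one_lt_of_neg hx (by linarith)
  have hterm : ∀ j : ℕ, x ^ (-(2:ℝ) * (j:ℝ) * α) = (x ^ (-(2:ℝ) * α)) ^ j := fun j => by
    rw [← Real.rpow_mul_natCast (by linarith)]
    ring_nf
  simp only [hterm, Finset.range_eq_Ico]
  simpa using geom_sum_Ico_le_of_lt_one (by positivity) hr (m := 0) (n := n)

theorem inv_pow_rpow_eq_rpow_neg_pow {x : ℝ} (hx : 0 ≤ x) (j : ℕ) (α : ℝ) :
    (x ^ j)⁻¹ ^ α = (x ^ (-α)) ^ j := by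
  rw [Real.inv_rpow (by positivity), ← Real.rpow_natCast_mul hx, ← Real.rpow_neg hx,
    ← Real.rpow_mul_natCast hx]
  ring_nf

noncomputable def dyadicCell (j : ℕ) (x : ℝ) : Set ℝ :=
  Ioc (((⌈(2:ℝ)^j * x⌉ : ℝ) - 1) / 2^j) ((⌈(2:ℝ)^j * x⌉ : ℝ) / 2^j)

section dyadicCell

variable (j : ℕ) (x : ℝ)

theorem mem_dyadicCell_self : x ∈ dyadicCell j x := by
  have h2j : (0:ℝ) < 2^j := by positivity
  constructor
  · rw [div_lt_iff₀ h2j]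
    linarith [Int.ceil_lt_add_one ((2:ℝ)^j * x)]
  · rw [le_div_iff₀ h2j, mul_comm]
    exact Int.le_ceil _

theorem volume_dyadicCell : volume (dyadicCell j x) = ENNReal.ofReal ((2:ℝ)^j)⁻¹ := by
  rw [dyadicCell, Real.volume_Ioc]
  congr 1
  field_simp
  ring

theorem volume_real_dyadicCell : volume.real (dyadicCell j x) = ((2:ℝ)^j)⁻¹ := by
  rw [measureReal_def, volume_dyadicCell, ENNReal.toReal_ofReal (by positivity)]

theorem abs_sub_le_of_mem_dyadicCell {y : ℝ} (hy : y ∈ dyadicCell j x) :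
    |y - x| ≤ ((2:ℝ)^j)⁻¹ := by
  obtain ⟨hxlo, hxhi⟩ := mem_dyadicCell_self j x
  have hlen : (⌈(2:ℝ)^j * x⌉ : ℝ) / 2^j - ((⌈(2:ℝ)^j * x⌉ : ℝ) - 1) / 2^j = ((2:ℝ)^j)⁻¹ := by
    field_simp
    ring
  rw [abs_le]
  constructor <;> linarith [hy.1, hy.2]

end dyadicCell

theorem dyadicCell_subset_Icc (j : ℕ) {x : ℝ} (hx : x ∈ Ioc (0:ℝ) 1) :
    dyadicCell j x ⊆ Icc 0 1 := by
  have h2j : (0:ℝ) < 2^j := by positivity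
  have hk₁ : (1:ℝ) ≤ ⌈(2:ℝ)^j * x⌉ := by exact_mod_cast Int.ceil_pos.mpr (mul_pos h2j hx.1)
  have hk₂ : (⌈(2:ℝ)^j * x⌉ : ℝ) ≤ 2^j := by
    exact_mod_cast Int.ceil_le.mpr (by push_cast; nlinarith [hx.2])
  refine Ioc_subset_Icc_self.trans (Icc_subset_Icc ?_ ?_)
  · exact div_nonneg (by linarith) h2j.le
  · rwa [div_le_one h2j]

theorem dyadicAvg_eq_setAverage (j : ℕ) (f : ℝ → ℝ) (x : ℝ) :
    dyadicAvg j f x = ⨍ y in dyadicCell j x, f y := by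
  rw [setAverage_eq, volume_real_dyadicCell, inv_inv, smul_eq_mul]
  rfl

theorem abs_dyadicAvg_sub_le {f : ℝ → ℝ} {α Cf : ℝ} (hα : 0 ≤ α) (hCf : 0 ≤ Cf)
    (hf : ∀ x ∈ Icc (0:ℝ) 1, ∀ y ∈ Icc (0:ℝ) 1, |f x - f y| ≤ Cf * |x - y| ^ α)
    (hmeas : Measurable f) (j : ℕ) {x : ℝ} (hx : x ∈ Ioc (0:ℝ) 1) :
    |dyadicAvg j f x - f x| ≤ Cf * ((2:ℝ) ^ (-α)) ^ j := by
  rw [dyadicAvg_eq_setAverage, ← inv_pow_rpow_eq_rpow_neg_pow zero_le_two]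
  refine abs_setAverage_sub_le measurableSet_Ioc (by simp [volume_dyadicCell])
    (by simp [volume_dyadicCell]) hmeas.aestronglyMeasurable fun y hy => ?_
  calc |f y - f x| ≤ Cf * |y - x| ^ α :=
        hf y (dyadicCell_subset_Icc j hx hy) x (Ioc_subset_Icc_self hx)
    _ ≤ Cf * ((2:ℝ) ^ j)⁻¹ ^ α := by
        gcongr
        exact abs_sub_le_of_mem_dyadicCell j x hy

theorem dyadicDiff_sq_le {f : ℝ → ℝ} {α Cf : ℝ} (hα : 0 ≤ α) (hCf : 0 ≤ Cf)
    (hf : ∀ x ∈ Icc (0:ℝ) 1, ∀ y ∈ Icc (0:ℝ) 1, |f x - f y| ≤ Cf * |x - y| ^ α)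
    (hmeas : Measurable f) (j : ℕ) {x : ℝ} (hx : x ∈ Ioc (0:ℝ) 1) :
    dyadicDiff j f x ^ 2 ≤ 4 * Cf ^ 2 * (2:ℝ) ^ (-(2:ℝ) * (j:ℝ) * α) := by
  have hρ : (2:ℝ) ^ (-α) ≤ 1 := Real.rpow_le_one_of_one_le_of_nonpos one_le_two (by linarith)
  have habs : |dyadicDiff j f x| ≤ 2 * Cf * ((2:ℝ) ^ (-α)) ^ j := by
    have hmono : Cf * ((2:ℝ) ^ (-α)) ^ (j + 1) ≤ Cf * ((2:ℝ) ^ (-α)) ^ j :=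
      mul_le_mul_of_nonneg_left (pow_le_pow_of_le_one (by positivity) hρ j.le_succ) hCf
    calc |dyadicDiff j f x|
        ≤ |dyadicAvg (j + 1) f x - f x| + |dyadicAvg j f x - f x| := by
          simpa only [dyadicDiff, abs_sub_comm (f x)] using abs_sub_le _ (f x) (dyadicAvg j f x)
      _ ≤ Cf * ((2:ℝ) ^ (-α)) ^ (j + 1) + Cf * ((2:ℝ) ^ (-α)) ^ j :=
          add_le_add (abs_dyadicAvg_sub_le hα hCf hf hmeas (j + 1) hx)
            (abs_dyadicAvg_sub_le hα hCf hf hmeas j hx)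
      _ ≤ 2 * Cf * ((2:ℝ) ^ (-α)) ^ j := by linarith
  have hsq : (((2:ℝ) ^ (-α)) ^ j) ^ 2 = (2:ℝ) ^ (-(2:ℝ) * (j:ℝ) * α) := by
    rw [← pow_mul, ← Real.rpow_mul_natCast zero_le_two]
    push_cast
    ring_nf
  calc dyadicDiff j f x ^ 2 = |dyadicDiff j f x| ^ 2 := (sq_abs _).symm
    _ ≤ (2 * Cf * ((2:ℝ) ^ (-α)) ^ j) ^ 2 := pow_le_pow_left₀ (abs_nonneg _) habs 2
    _ = 4 * Cf ^ 2 * (2:ℝ) ^ (-(2:ℝ) * (j:ℝ) * α) := by rw [mul_pow, hsq]; ring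


theorem paraproduct_residual_bound_general (f A : ℝ → ℝ) (α Cf a b M : ℝ)
    (hα : 0 < α) (hCf : 0 < Cf)
    (hf : ∀ x ∈ Set.Icc (0:ℝ) 1, ∀ y ∈ Set.Icc (0:ℝ) 1,
      |f x - f y| ≤ Cf * |x - y| ^ α)
    (hmeas : Measurable f)
    (hA : ContDiff ℝ 2 A)
    (hrange : ∀ j : ℕ, ∀ x ∈ Set.Ioc (0:ℝ) 1, dyadicAvg j f x ∈ Set.Icc a b)
    (hM : ∀ y ∈ Set.Icc a b, |iteratedDeriv 2 A y| ≤ M) :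
    ∃ C > 0, ∀ N : ℕ, ∀ x ∈ Set.Ioc (0:ℝ) 1,
      |A (dyadicAvg (N+1) f x) -
          (A (dyadicAvg 0 f x) +
            ∑ j ∈ Finset.range (N+1), deriv A (dyadicAvg j f x) * dyadicDiff j f x)|
        ≤ C * ∑ j ∈ Finset.range (N+1), (2:ℝ) ^ (-(2:ℝ) * (j:ℝ) * α) ∧
      C * ∑ j ∈ Finset.range (N+1), (2:ℝ) ^ (-(2:ℝ) * (j:ℝ) * α)
        ≤ C / (1 - (2:ℝ) ^ (-(2:ℝ) * α)) := by
  have hM0 : 0 ≤ M := (abs_nonneg _).trans (hM _ (hrange 0 1 ⟨one_pos, le_rfl⟩))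
  refine ⟨max (4 * M * Cf ^ 2) 1, by positivity, fun N x hx => ⟨?_, ?_⟩⟩
  · calc _ ≤ M * ∑ j ∈ Finset.range (N + 1), dyadicDiff j f x ^ 2 :=
          abs_sub_add_sum_deriv_mul_le hA hM (fun j => hrange j x hx) (N + 1)
      _ ≤ M * ∑ j ∈ Finset.range (N + 1), 4 * Cf ^ 2 * (2:ℝ) ^ (-(2:ℝ) * (j:ℝ) * α) := by
          gcongr with j
          exact dyadicDiff_sq_le hα.le hCf.le hf hmeas j hx
      _ = 4 * M * Cf ^ 2 * ∑ j ∈ Finset.range (N + 1), (2:ℝ) ^ (-(2:ℝ) * (j:ℝ) * α) := by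
          rw [← Finset.mul_sum]; ring
      _ ≤ _ := by gcongr; exact le_max_left _ _
  · rw [div_eq_mul_inv]
    gcongr
    exact sum_range_rpow_neg_two_mul_le one_lt_two hα (N + 1)

/-- Uniform bound on the residual of the one-dimensional paraproduct
approximation `Ã_N(f) = A(P⁰f) + ∑_{j≤N} A'(Pʲf)·Qʲf` of `A(P^{N+1}f)`. -/
theorem paraproduct_residual_bound (f A : ℝ → ℝ) (α Cf a b M : ℝ)
    (hα : 0 < α) (hα' : α < 1/2) (hCf : 0 < Cf)
    (hf : ∀ x ∈ Set.Icc (0:ℝ) 1, ∀ y ∈ Set.Icc (0:ℝ) 1,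
      |f x - f y| ≤ Cf * |x - y| ^ α)
    (hmeas : Measurable f)
    (hzero : ∀ x ∈ Set.Ioc (0:ℝ) 1, dyadicAvg 0 f x = 0)
    (hconv : ∀ x ∈ Set.Ioc (0:ℝ) 1,
      Tendsto (fun j : ℕ => dyadicAvg j f x) atTop (nhds (f x)))
    (hA : ContDiff ℝ 2 A)
    (hrange : ∀ j : ℕ, ∀ x ∈ Set.Ioc (0:ℝ) 1, dyadicAvg j f x ∈ Set.Icc a b)
    (hM : ∀ y ∈ Set.Icc a b, |iteratedDeriv 2 A y| ≤ M) :
    ∃ C > 0, ∀ N : ℕ, ∀ x ∈ Set.Ioc (0:ℝ) 1,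
      |A (dyadicAvg (N+1) f x) -
          (A (dyadicAvg 0 f x) +
            ∑ j ∈ Finset.range (N+1), deriv A (dyadicAvg j f x) * dyadicDiff j f x)|
        ≤ C * ∑ j ∈ Finset.range (N+1), (2:ℝ) ^ (-(2:ℝ) * (j:ℝ) * α) ∧
      C * ∑ j ∈ Finset.range (N+1), (2:ℝ) ^ (-(2:ℝ) * (j:ℝ) * α)
        ≤ C / (1 - (2:ℝ) ^ (-(2:ℝ) * α)) :=
  paraproduct_residual_bound_general f A α Cf a b M hα hCf hf hmeas hA hrange hM
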